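/- arXiv:1708.03829 — 2 statements merged into one kernel-verified Lean document; each statement's English description precedes it below -/
import Mathlib

section
/- Let γ₁,…,γₙ, λ_{n+1},…,λ_{2n} ∈ ℝ with γᵢ > 0 for all i, and λ_Ω ∈ ℝ³. The gradient of G(u) = Σ_{i=1}^n (γᵢ/2)uᵢ² + Σ_{i=1}^n λ_{n+i}uᵢ + λ_Ωᵀκ with respect to u vanishes if and only if, for every 1 ≤ i ≤ n, uᵢ = −γᵢ⁻¹{λ_{n+i} + λ_Ωᵀ A⁻¹ (mᵢ sᵢ × ζ′ᵢ(θᵢ))}. -/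
open Matrix Finset

/-- The hat map: `hatM w` is the `3 × 3` skew-symmetric matrix with `hatM w *ᵥ y = w ×₃ y`. -/
noncomputable def hatM (w : Fin 3 → ℝ) : Matrix (Fin 3) (Fin 3) ℝ :=
  !![0, -w 2, w 1; w 2, 0, -w 0; -w 1, w 0, 0]

/-- The inertia tensor `𝕀 = diag(d₁, d₂, d₃)`. -/
noncomputable def inertiaM (d1 d2 d3 : ℝ) : Matrix (Fin 3) (Fin 3) ℝ :=
  Matrix.diagonal ![d1, d2, d3]

/-- `A = Σ_{i=0}^n mᵢ ŝᵢ² − 𝕀`, where `sᵢ = rΓ + ζᵢ(θᵢ)`; the static part (index `0`)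
carries mass `m0`, rail curve `z0` and parameter `t0`. -/
noncomputable def ballA {n : ℕ} (r d1 d2 d3 m0 t0 : ℝ) (Γ : Fin 3 → ℝ)
    (z0 : ℝ → Fin 3 → ℝ) (m : Fin n → ℝ) (z : Fin n → ℝ → Fin 3 → ℝ)
    (θ : Fin n → ℝ) : Matrix (Fin 3) (Fin 3) ℝ :=
  m0 • (hatM (r • Γ + z0 t0) * hatM (r • Γ + z0 t0))
    + (∑ i, m i • (hatM (r • Γ + z i (θ i)) * hatM (r • Γ + z i (θ i))))
    - inertiaM d1 d2 d3

/-- `κ = A⁻¹[Ω × 𝕀Ω + rΓ̃ × Γ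
      + Σ_{i=0}^n mᵢ sᵢ × (gΓ + Ω × (Ω × ζᵢ + 2θ̇ᵢζ′ᵢ) + θ̇ᵢ²ζ″ᵢ + uᵢζ′ᵢ)]`, the
angular-acceleration function of the rolling ball; `Γt` is `Γ̃`. -/
noncomputable def ballKappa {n : ℕ} (r g d1 d2 d3 m0 t0 td0 u0 : ℝ)
    (Γ Γt : Fin 3 → ℝ) (z0 : ℝ → Fin 3 → ℝ)
    (m : Fin n → ℝ) (z : Fin n → ℝ → Fin 3 → ℝ)
    (θ θd u : Fin n → ℝ) (Ω : Fin 3 → ℝ) : Fin 3 → ℝ :=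
  (ballA r d1 d2 d3 m0 t0 Γ z0 m z θ)⁻¹ *ᵥ
    (crossProduct Ω (inertiaM d1 d2 d3 *ᵥ Ω) + r • crossProduct Γt Γ
      + m0 • crossProduct (r • Γ + z0 t0)
          (g • Γ + crossProduct Ω (crossProduct Ω (z0 t0) + (2 * td0) • deriv z0 t0)
            + td0 ^ 2 • deriv (deriv z0) t0 + u0 • deriv z0 t0)
      + ∑ i, m i • crossProduct (r • Γ + z i (θ i))
          (g • Γ
            + crossProduct Ω (crossProduct Ω (z i (θ i)) + (2 * θd i) • deriv (z i) (θ i))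
            + θd i ^ 2 • deriv (deriv (z i)) (θ i) + u i • deriv (z i) (θ i)))

/-- The `u`-dependent part of the ball Hamiltonian:
`G(u) = Σ (γᵢ/2)uᵢ² + Σ λ_{n+i}uᵢ + λ_Ωᵀκ(u)`; `lam2 i = λ_{n+i}` and `lamΩ = λ_Ω`. -/
noncomputable def ballG {n : ℕ} (r g d1 d2 d3 m0 t0 td0 u0 : ℝ)
    (Γ Γt lamΩ : Fin 3 → ℝ) (z0 : ℝ → Fin 3 → ℝ)
    (m : Fin n → ℝ) (z : Fin n → ℝ → Fin 3 → ℝ)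
    (θ θd : Fin n → ℝ) (Ω : Fin 3 → ℝ) (γ lam2 : Fin n → ℝ) (u : Fin n → ℝ) : ℝ :=
  (∑ j, γ j / 2 * u j ^ 2) + (∑ j, lam2 j * u j)
    + lamΩ ⬝ᵥ ballKappa r g d1 d2 d3 m0 t0 td0 u0 Γ Γt z0 m z θ θd u Ω

/-! The control `u` enters `κ` only through the terms `uᵢ mᵢ sᵢ × ζ′ᵢ`, while `A` does not depend
on `u`; hence `κ` is affine in `u` and `G` is a separable quadratic `Σ (γᵢ/2)uᵢ² + bᵢuᵢ + const`
with `bᵢ = λ_{n+i} + λ_Ωᵀ A⁻¹(mᵢ sᵢ × ζ′ᵢ)`. Its gradient is `(γᵢuᵢ + bᵢ)ᵢ`. -/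

section SeparableQuadratic

variable {n : ℕ} (γ b : Fin n → ℝ) (c : ℝ)

theorem hasFDerivAt_sum_quadratic (u : Fin n → ℝ) :
    HasFDerivAt (fun v : Fin n → ℝ => ∑ j, (γ j / 2 * v j ^ 2 + b j * v j) + c)
      (∑ j, (γ j * u j + b j) • (ContinuousLinearMap.proj j : (Fin n → ℝ) →L[ℝ] ℝ)) u := by
  refine (HasFDerivAt.fun_sum fun j _ => ?_).add_const c
  have hderiv : HasDerivAt (fun x : ℝ => γ j / 2 * x ^ 2 + b j * x) (γ j * u j + b j) (u j) := by
    refine (((hasDerivAt_pow 2 (u j)).const_mul (γ j / 2)).fun_add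
      ((hasDerivAt_id' (u j)).const_mul (b j))).congr_deriv ?_
    push_cast
    ring
  exact hderiv.comp_hasFDerivAt u
    (ContinuousLinearMap.proj (R := ℝ) (φ := fun _ : Fin n => ℝ) j).hasFDerivAt

theorem sum_smul_proj_eq_zero_iff (a : Fin n → ℝ) :
    (∑ j, a j • (ContinuousLinearMap.proj j : (Fin n → ℝ) →L[ℝ] ℝ)) = 0 ↔ a = 0 := by
  refine ⟨fun h => funext fun i => ?_, fun h => by simp [h]⟩
  simpa [Pi.single_apply] using congrArg (· (Pi.single i 1)) h

theorem fderiv_sum_quadratic_eq_zero_iff (hγ : ∀ i, γ i ≠ 0) (u : Fin n → ℝ) :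
    fderiv ℝ (fun v : Fin n → ℝ => ∑ j, (γ j / 2 * v j ^ 2 + b j * v j) + c) u = 0
      ↔ ∀ i, u i = -(γ i)⁻¹ * b i := by
  rw [(hasFDerivAt_sum_quadratic γ b c u).fderiv, sum_smul_proj_eq_zero_iff, funext_iff]
  refine forall_congr' fun i => ?_
  rw [Pi.zero_apply, neg_mul, eq_neg_iff_add_eq_zero, ← mul_right_inj' (hγ i) (b := u i + _),
    mul_add, mul_inv_cancel_left₀ (hγ i), mul_zero]

end SeparableQuadratic

theorem ballKappa_eq_add_sum {n : ℕ} (r g d1 d2 d3 m0 t0 td0 u0 : ℝ) (Γ Γt : Fin 3 → ℝ)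
    (z0 : ℝ → Fin 3 → ℝ) (m : Fin n → ℝ) (z : Fin n → ℝ → Fin 3 → ℝ)
    (θ θd u : Fin n → ℝ) (Ω : Fin 3 → ℝ) :
    ballKappa r g d1 d2 d3 m0 t0 td0 u0 Γ Γt z0 m z θ θd u Ω
      = ballKappa r g d1 d2 d3 m0 t0 td0 u0 Γ Γt z0 m z θ θd 0 Ω
        + ∑ i, u i • ((ballA r d1 d2 d3 m0 t0 Γ z0 m z θ)⁻¹ *ᵥ
            (m i • crossProduct (r • Γ + z i (θ i)) (deriv (z i) (θ i)))) := by
  simp only [ballKappa, Pi.zero_apply, zero_smul, add_zero, ← mulVec_add, ← mulVec_smul,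
    ← mulVec_sum, map_add, map_smul, smul_add, sum_add_distrib, add_assoc, smul_comm (u _)]

theorem ballG_eq_sum_quadratic {n : ℕ} (r g d1 d2 d3 m0 t0 td0 u0 : ℝ) (Γ Γt lamΩ : Fin 3 → ℝ)
    (z0 : ℝ → Fin 3 → ℝ) (m : Fin n → ℝ) (z : Fin n → ℝ → Fin 3 → ℝ)
    (θ θd : Fin n → ℝ) (Ω : Fin 3 → ℝ) (γ lam2 u : Fin n → ℝ) :
    ballG r g d1 d2 d3 m0 t0 td0 u0 Γ Γt lamΩ z0 m z θ θd Ω γ lam2 u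
      = ∑ j, (γ j / 2 * u j ^ 2
          + (lam2 j + lamΩ ⬝ᵥ ((ballA r d1 d2 d3 m0 t0 Γ z0 m z θ)⁻¹ *ᵥ
              (m j • crossProduct (r • Γ + z j (θ j)) (deriv (z j) (θ j))))) * u j)
        + lamΩ ⬝ᵥ ballKappa r g d1 d2 d3 m0 t0 td0 u0 Γ Γt z0 m z θ θd 0 Ω := by
  rw [ballG, ballKappa_eq_add_sum, dotProduct_add, dotProduct_sum]
  simp only [dotProduct_smul, smul_eq_mul, add_mul, sum_add_distrib, mul_comm (u _)]
  ring

theorem stmt13_general {n : ℕ}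
    (r g d1 d2 d3 m0 t0 td0 u0 : ℝ) (Γ Γt lamΩ : Fin 3 → ℝ)
    (z0 : ℝ → Fin 3 → ℝ) (m : Fin n → ℝ) (z : Fin n → ℝ → Fin 3 → ℝ)
    (θ θd u : Fin n → ℝ) (Ω : Fin 3 → ℝ) (γ lam2 : Fin n → ℝ)
    (hγ : ∀ i, 0 < γ i) :
    fderiv ℝ
        (ballG r g d1 d2 d3 m0 t0 td0 u0 Γ Γt lamΩ z0 m z θ θd Ω γ lam2) u = 0
      ↔ ∀ i : Fin n,
          u i = -(γ i)⁻¹ *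
            (lam2 i
              + lamΩ ⬝ᵥ ((ballA r d1 d2 d3 m0 t0 Γ z0 m z θ)⁻¹ *ᵥ
                  (m i • crossProduct (r • Γ + z i (θ i)) (deriv (z i) (θ i))))) := by
  rw [funext (ballG_eq_sum_quadratic r g d1 d2 d3 m0 t0 td0 u0 Γ Γt lamΩ z0 m z θ θd Ω γ lam2)]
  exact fderiv_sum_quadratic_eq_zero_iff _ _ _ (fun i => (hγ i).ne') u

/-- If `γᵢ > 0` for all `i`, the gradient of `G` with respect to `u`
vanishes iff, for every `i`, `uᵢ = −γᵢ⁻¹{λ_{n+i} + λ_Ωᵀ A⁻¹(mᵢ sᵢ × ζ′ᵢ)}`. -/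
theorem stmt13 {n : ℕ}
    (r g d1 d2 d3 m0 t0 td0 u0 : ℝ) (Γ Γt lamΩ : Fin 3 → ℝ)
    (z0 : ℝ → Fin 3 → ℝ) (m : Fin n → ℝ) (z : Fin n → ℝ → Fin 3 → ℝ)
    (θ θd u : Fin n → ℝ) (Ω : Fin 3 → ℝ) (γ lam2 : Fin n → ℝ)
    (hz0 : ∀ x y, z0 x = z0 y) (htd0 : td0 = 0) (hu0 : u0 = 0)
    (hz : ∀ i, ContDiff ℝ 3 (z i))
    (hA : IsUnit (ballA r d1 d2 d3 m0 t0 Γ z0 m z θ).det)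
    (hγ : ∀ i, 0 < γ i) :
    fderiv ℝ
        (ballG r g d1 d2 d3 m0 t0 td0 u0 Γ Γt lamΩ z0 m z θ θd Ω γ lam2) u = 0
      ↔ ∀ i : Fin n,
          u i = -(γ i)⁻¹ *
            (lam2 i
              + lamΩ ⬝ᵥ ((ballA r d1 d2 d3 m0 t0 Γ z0 m z θ)⁻¹ *ᵥ
                  (m i • crossProduct (r • Γ + z i (θ i)) (deriv (z i) (θ i))))) :=
  stmt13_general r g d1 d2 d3 m0 t0 td0 u0 Γ Γt lamΩ z0 m z θ θd u Ω γ lam2 hγ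
end

section
/- For each 1 ≤ j ≤ n, assuming A is invertible at the point considered, the partial derivative of κ (an ℝ³-valued function, A depending on θ_j through s_j = rΓ + ζ_j(θ_j)) with respect to θ_j equals A⁻¹ m_j [ζ′_j × {gΓ + Ω × (Ω × ζ_j + 2θ̇_jζ′_j) + θ̇_j²ζ″_j + u_jζ′_j} + s_j × {Ω × (Ω × ζ′_j + 2θ̇_jζ″_j) + θ̇_j²ζ‴_j + u_jζ″_j} − 2 Sym(ŝ_j ζ̂′_j) κ], where Sym(M) = (M + Mᵀ)/2, κ on the right-hand side is the value at the point, and ζ_j with its derivatives is evaluated at θ_j. -/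
open Matrix Finset

/-- `Sym(M) = (M + Mᵀ)/2`. -/
noncomputable def symM (M : Matrix (Fin 3) (Fin 3) ℝ) : Matrix (Fin 3) (Fin 3) ℝ :=
  (1 / 2 : ℝ) • (M + M.transpose)

/-!
Write `κ = A⁻¹ b`. Both `A` and `b` depend on `θⱼ` only through their `j`-th summand, and
`(A⁻¹)' = -A⁻¹ A' A⁻¹` gives `κ' = A⁻¹ (b' - A' κ)`. The hat map is linear with skew-symmetric
values, so `(ŝⱼ²)' = ζ̂′ⱼ ŝⱼ + ŝⱼ ζ̂′ⱼ = 2 Sym(ŝⱼ ζ̂′ⱼ)`. In `b` the product rule for `×` applies;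
the bracket `gΓ + Ω × (Ω × ζ + 2θ̇ζ′) + θ̇²ζ″ + uζ′` is affine in `ζ`, so its derivative is the
same bracket for `ζ′` with the gravity term dropped.
-/

-- Matrices carry no default norm; any choice gives the same derivatives.
attribute [local instance] Matrix.linftyOpNormedRing Matrix.linftyOpNormedAlgebra

section Calculus

variable {𝕜 : Type*} [NontriviallyNormedField 𝕜] {x : 𝕜}

theorem ContDiff.differentiable_iterate_deriv {F : Type*} [NormedAddCommGroup F]
    [NormedSpace 𝕜 F] {f : 𝕜 → F} {n : WithTop ℕ∞} (h : ContDiff 𝕜 n f) {k : ℕ}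
    (hk : (k : WithTop ℕ∞) < n) : Differentiable 𝕜 (deriv^[k] f) := by
  simpa only [iteratedDeriv_eq_iterate] using h.differentiable_iteratedDeriv k hk

theorem hasDerivAt_sum_update {ι E : Type*} [Fintype ι] [DecidableEq ι] [NormedAddCommGroup E]
    [NormedSpace 𝕜 E] (F : ι → 𝕜 → E) (θ : ι → 𝕜) (j : ι) {F' : E}
    (h : HasDerivAt (F j) F' (θ j)) :
    HasDerivAt (fun v => ∑ i, F i (Function.update θ j v i)) F' (θ j) := by
  have hterm (i : ι) :
      HasDerivAt (fun v => F i (Function.update θ j v i)) (if i = j then F' else 0) (θ j) := by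
    rcases eq_or_ne i j with rfl | hij
    · simpa using h
    · simpa [hij] using hasDerivAt_const (θ j) (F i (θ i))
  simpa using HasDerivAt.fun_sum (u := Finset.univ) fun i _ => hterm i

variable [CompleteSpace 𝕜]

theorem HasDerivAt.crossProduct {f g : 𝕜 → Fin 3 → 𝕜} {f' g' : Fin 3 → 𝕜}
    (hf : HasDerivAt f f' x) (hg : HasDerivAt g g' x) :
    HasDerivAt (fun v => f v ⨯₃ g v) (f' ⨯₃ g x + f x ⨯₃ g') x := by
  simpa [add_comm] using
    _root_.crossProduct.toContinuousBilinearMap.hasDerivAt_of_bilinear (fun _ => hf) (fun _ => hg)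

end Calculus

section MatrixCalculus

variable {n : Type*} [Fintype n] [DecidableEq n] {x : ℝ}

theorem HasDerivAt.matrix_mulVec {M : ℝ → Matrix n n ℝ} {M' : Matrix n n ℝ}
    {b : ℝ → n → ℝ} {b' : n → ℝ} (hM : HasDerivAt M M' x) (hb : HasDerivAt b b' x) :
    HasDerivAt (fun v => M v *ᵥ b v) (M' *ᵥ b x + M x *ᵥ b') x := by
  simpa [add_comm] using
    (mulVecBilin ℝ ℝ).toContinuousBilinearMap.hasDerivAt_of_bilinear
      (fun _ => hM) (fun _ => hb)

theorem HasDerivAt.matrix_inv {A : ℝ → Matrix n n ℝ} {A' : Matrix n n ℝ}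
    (hA : HasDerivAt A A' x) (h : IsUnit (A x)) :
    HasDerivAt (fun v => (A v)⁻¹) (-((A x)⁻¹ * A' * (A x)⁻¹)) x := by
  have := (hasFDerivAt_ringInverse (𝕜 := ℝ) h.unit).comp_hasDerivAt x hA
  rw [Matrix.coe_units_inv, h.unit_spec] at this
  simp only [Function.comp_def, _root_.neg_apply,
    ContinuousLinearMap.mulLeftRight_apply, Matrix.nonsing_inv_eq_ringInverse] at this ⊢
  exact this

theorem HasDerivAt.matrix_inv_mulVec {A : ℝ → Matrix n n ℝ} {A' : Matrix n n ℝ}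
    {b : ℝ → n → ℝ} {b' : n → ℝ} (hA : HasDerivAt A A' x) (hb : HasDerivAt b b' x)
    (h : IsUnit (A x).det) :
    HasDerivAt (fun v => (A v)⁻¹ *ᵥ b v) ((A x)⁻¹ *ᵥ (b' - A' *ᵥ ((A x)⁻¹ *ᵥ b x))) x := by
  convert (hA.matrix_inv ((Matrix.isUnit_iff_isUnit_det _).mpr h)).matrix_mulVec hb using 1
  rw [Matrix.mulVec_sub, Matrix.neg_mulVec, Matrix.mulVec_mulVec, Matrix.mulVec_mulVec]
  abel

end MatrixCalculus

section RollingBall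

noncomputable def hatLinearMap : (Fin 3 → ℝ) →ₗ[ℝ] Matrix (Fin 3) (Fin 3) ℝ :=
  LinearMap.toMatrix'.toLinearMap ∘ₗ crossProduct

theorem coe_hatLinearMap : ⇑hatLinearMap = hatM := by
  ext w i j
  fin_cases i <;> fin_cases j <;> simp [hatLinearMap, hatM, LinearMap.toMatrix'_apply, cross_apply]

theorem HasDerivAt.hatM {f : ℝ → Fin 3 → ℝ} {f' : Fin 3 → ℝ} {x : ℝ} (hf : HasDerivAt f f' x) :
    HasDerivAt (fun v => hatM (f v)) (hatM f') x := by
  have h := hatLinearMap.toContinuousLinearMap.hasFDerivAt.comp_hasDerivAt x hf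
  rw [LinearMap.coe_toContinuousLinearMap', coe_hatLinearMap] at h
  exact h.congr_deriv (congrFun coe_hatLinearMap f')

theorem hatM_transpose (w : Fin 3 → ℝ) : (hatM w)ᵀ = -hatM w := by
  ext i j
  fin_cases i <;> fin_cases j <;> simp [hatM]

theorem two_smul_symM_hatM_mul (a b : Fin 3 → ℝ) :
    (2 : ℝ) • symM (hatM a * hatM b) = hatM b * hatM a + hatM a * hatM b := by
  rw [symM, smul_smul, transpose_mul, hatM_transpose, hatM_transpose, neg_mul_neg]
  norm_num [add_comm]

noncomputable def railAccel (g : ℝ) (Γ Ω : Fin 3 → ℝ) (ω a : ℝ) (ζ : ℝ → Fin 3 → ℝ) (t : ℝ) :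
    Fin 3 → ℝ :=
  g • Γ + Ω ⨯₃ (Ω ⨯₃ ζ t + (2 * ω) • deriv ζ t) + ω ^ 2 • deriv (deriv ζ) t + a • deriv ζ t

theorem hasDerivAt_railAccel (g : ℝ) (Γ Ω : Fin 3 → ℝ) (ω a : ℝ) {ζ : ℝ → Fin 3 → ℝ}
    (hζ : ContDiff ℝ 3 ζ) (t : ℝ) :
    HasDerivAt (railAccel g Γ Ω ω a ζ) (railAccel 0 Γ Ω ω a (deriv ζ) t) t := by
  have hd (k : ℕ) (hk : k < 3) : HasDerivAt (deriv^[k] ζ) (deriv^[k + 1] ζ t) t := by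
    rw [Function.iterate_succ_apply']
    exact (hζ.differentiable_iterate_deriv (mod_cast hk) t).hasDerivAt
  have h0 : HasDerivAt ζ (deriv ζ t) t := hd 0 (by norm_num)
  have h1 : HasDerivAt (deriv ζ) (deriv (deriv ζ) t) t := hd 1 (by norm_num)
  have h2 : HasDerivAt (deriv (deriv ζ)) (deriv (deriv (deriv ζ)) t) t := hd 2 (by norm_num)
  have hΩ := hasDerivAt_const t Ω
  exact ((((hΩ.crossProduct ((hΩ.crossProduct h0).fun_add (h1.fun_const_smul (2 * ω)))).const_add
    (g • Γ)).fun_add (h2.fun_const_smul (ω ^ 2))).fun_add (h1.fun_const_smul a)).congr_deriv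
    (by simp [railAccel])

variable {n : ℕ} (r g d1 d2 d3 m0 t0 td0 u0 : ℝ) (Γ Γt : Fin 3 → ℝ) (z0 : ℝ → Fin 3 → ℝ)
  (m : Fin n → ℝ) (z : Fin n → ℝ → Fin 3 → ℝ) (θ θd u : Fin n → ℝ) (Ω : Fin 3 → ℝ)

noncomputable def ballRhs : Fin 3 → ℝ :=
  Ω ⨯₃ (inertiaM d1 d2 d3 *ᵥ Ω) + r • Γt ⨯₃ Γ
    + m0 • (r • Γ + z0 t0) ⨯₃ railAccel g Γ Ω td0 u0 z0 t0
    + ∑ i, m i • (r • Γ + z i (θ i)) ⨯₃ railAccel g Γ Ω (θd i) (u i) (z i) (θ i)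

theorem ballKappa_eq : ballKappa r g d1 d2 d3 m0 t0 td0 u0 Γ Γt z0 m z θ θd u Ω =
    (ballA r d1 d2 d3 m0 t0 Γ z0 m z θ)⁻¹ *ᵥ
      ballRhs r g d1 d2 d3 m0 t0 td0 u0 Γ Γt z0 m z θ θd u Ω :=
  rfl

variable {z} (j : Fin n)

theorem hasDerivAt_ballA_update (hz : DifferentiableAt ℝ (z j) (θ j)) :
    HasDerivAt (fun v => ballA r d1 d2 d3 m0 t0 Γ z0 m z (Function.update θ j v))
      (m j • (hatM (deriv (z j) (θ j)) * hatM (r • Γ + z j (θ j))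
        + hatM (r • Γ + z j (θ j)) * hatM (deriv (z j) (θ j)))) (θ j) := by
  have hs := hz.hasDerivAt.const_add (r • Γ)
  exact ((hasDerivAt_sum_update (fun i t => m i • (hatM (r • Γ + z i t) * hatM (r • Γ + z i t)))
    θ j ((hs.hatM.mul hs.hatM).const_smul (m j))).const_add _).sub_const _

theorem hasDerivAt_ballRhs_update (hz : ContDiff ℝ 3 (z j)) :
    HasDerivAt
      (fun v => ballRhs r g d1 d2 d3 m0 t0 td0 u0 Γ Γt z0 m z (Function.update θ j v) θd u Ω)
      (m j • (deriv (z j) (θ j) ⨯₃ railAccel g Γ Ω (θd j) (u j) (z j) (θ j)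
        + (r • Γ + z j (θ j)) ⨯₃ railAccel 0 Γ Ω (θd j) (u j) (deriv (z j)) (θ j))) (θ j) := by
  have hs := (hz.differentiable (by norm_num) (θ j)).hasDerivAt.const_add (r • Γ)
  have hterm :=
    (hs.crossProduct (hasDerivAt_railAccel g Γ Ω (θd j) (u j) hz (θ j))).const_smul (m j)
  exact (hasDerivAt_sum_update
    (fun i t => m i • (r • Γ + z i t) ⨯₃ railAccel g Γ Ω (θd i) (u i) (z i) t) θ j
    hterm).const_add _

end RollingBall

theorem stmt16_general {n : ℕ}
    (r g d1 d2 d3 m0 t0 td0 u0 : ℝ) (Γ Γt : Fin 3 → ℝ)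
    (z0 : ℝ → Fin 3 → ℝ) (m : Fin n → ℝ) (z : Fin n → ℝ → Fin 3 → ℝ)
    (θ θd u : Fin n → ℝ) (Ω : Fin 3 → ℝ)
    (hz : ∀ i, ContDiff ℝ 3 (z i))
    (hA : IsUnit (ballA r d1 d2 d3 m0 t0 Γ z0 m z θ).det)
    (j : Fin n) :
    HasDerivAt
      (fun v : ℝ =>
        ballKappa r g d1 d2 d3 m0 t0 td0 u0 Γ Γt z0 m z (Function.update θ j v) θd u Ω)
      ((ballA r d1 d2 d3 m0 t0 Γ z0 m z θ)⁻¹ *ᵥ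
        (m j •
          (crossProduct (deriv (z j) (θ j))
              (g • Γ
                + crossProduct Ω (crossProduct Ω (z j (θ j)) + (2 * θd j) • deriv (z j) (θ j))
                + θd j ^ 2 • deriv (deriv (z j)) (θ j) + u j • deriv (z j) (θ j))
            + crossProduct (r • Γ + z j (θ j))
                (crossProduct Ω
                    (crossProduct Ω (deriv (z j) (θ j))
                      + (2 * θd j) • deriv (deriv (z j)) (θ j))
                  + θd j ^ 2 • deriv (deriv (deriv (z j))) (θ j)
                  + u j • deriv (deriv (z j)) (θ j))
            - ((2 : ℝ) • symM (hatM (r • Γ + z j (θ j)) * hatM (deriv (z j) (θ j)))) *ᵥ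
                ballKappa r g d1 d2 d3 m0 t0 td0 u0 Γ Γt z0 m z θ θd u Ω)))
      (θ j) := by
  have hκ := (hasDerivAt_ballA_update r d1 d2 d3 m0 t0 Γ z0 m θ j
    ((hz j).differentiable (by norm_num) (θ j))).matrix_inv_mulVec
    (hasDerivAt_ballRhs_update r g d1 d2 d3 m0 t0 td0 u0 Γ Γt z0 m θ θd u Ω j (hz j))
    (by rwa [Function.update_eq_self])
  simp only [Function.update_eq_self] at hκ
  refine hκ.congr_deriv ?_
  rw [ballKappa_eq, two_smul_symM_hatM_mul, smul_sub, smul_mulVec]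
  simp only [railAccel, zero_smul, zero_add]

/-- For each `1 ≤ j ≤ n`, assuming `A` is invertible at the point
considered, the partial derivative of `κ` with respect to `θ_j` equals
`A⁻¹ m_j [ζ′_j × {gΓ + Ω × (Ω × ζ_j + 2θ̇_jζ′_j) + θ̇_j²ζ″_j + u_jζ′_j}
  + s_j × {Ω × (Ω × ζ′_j + 2θ̇_jζ″_j) + θ̇_j²ζ‴_j + u_jζ″_j}
  − 2 Sym(ŝ_j ζ̂′_j) κ]`. -/
theorem stmt16 {n : ℕ}
    (r g d1 d2 d3 m0 t0 td0 u0 : ℝ) (Γ Γt : Fin 3 → ℝ)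
    (z0 : ℝ → Fin 3 → ℝ) (m : Fin n → ℝ) (z : Fin n → ℝ → Fin 3 → ℝ)
    (θ θd u : Fin n → ℝ) (Ω : Fin 3 → ℝ)
    (hz0 : ∀ x y, z0 x = z0 y) (htd0 : td0 = 0) (hu0 : u0 = 0)
    (hz : ∀ i, ContDiff ℝ 3 (z i))
    (hA : IsUnit (ballA r d1 d2 d3 m0 t0 Γ z0 m z θ).det)
    (j : Fin n) :
    HasDerivAt
      (fun v : ℝ =>
        ballKappa r g d1 d2 d3 m0 t0 td0 u0 Γ Γt z0 m z (Function.update θ j v) θd u Ω)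
      ((ballA r d1 d2 d3 m0 t0 Γ z0 m z θ)⁻¹ *ᵥ
        (m j •
          (crossProduct (deriv (z j) (θ j))
              (g • Γ
                + crossProduct Ω (crossProduct Ω (z j (θ j)) + (2 * θd j) • deriv (z j) (θ j))
                + θd j ^ 2 • deriv (deriv (z j)) (θ j) + u j • deriv (z j) (θ j))
            + crossProduct (r • Γ + z j (θ j))
                (crossProduct Ω
                    (crossProduct Ω (deriv (z j) (θ j))
                      + (2 * θd j) • deriv (deriv (z j)) (θ j))
                  + θd j ^ 2 • deriv (deriv (deriv (z j))) (θ j)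
                  + u j • deriv (deriv (z j)) (θ j))
            - ((2 : ℝ) • symM (hatM (r • Γ + z j (θ j)) * hatM (deriv (z j) (θ j)))) *ᵥ
                ballKappa r g d1 d2 d3 m0 t0 td0 u0 Γ Γt z0 m z θ θd u Ω)))
      (θ j) :=
  stmt16_general r g d1 d2 d3 m0 t0 td0 u0 Γ Γt z0 m z θ θd u Ω hz hA j
end
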